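/- arXiv:q-alg/9702009 — 3 statements merged into one kernel-verified Lean document; each statement's English description precedes it below -/
import Mathlib

section
/- Arnold's identity: for three distinct points z1, z2, z3 in the complex plane, the sum of wedge products ω12 ∧ ω23 + ω23 ∧ ω31 + ω31 ∧ ω12 equals zero, where ωij = (dzi − dzj)/(zi − zj). -/
theorem inv_mul_inv_add_inv_mul_inv_add_inv_mul_inv_eq_zero {K : Type*} [Field K] {a b c : K}
    (ha : a ≠ 0) (hb : b ≠ 0) (hc : c ≠ 0) (h : a + b + c = 0) :
    a⁻¹ * b⁻¹ + b⁻¹ * c⁻¹ + c⁻¹ * a⁻¹ = 0 := by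
  field_simp
  linear_combination h

/-- **Arnold's identity.** For three distinct points `z 0, z 1, z 2` in ℂ, the
cyclic sum `ω₁₂∧ω₂₃ + ω₂₃∧ω₃₁ + ω₃₁∧ω₁₂` of wedge products of the 1-forms
`ω i j = (dz i − dz j)/(z i − z j)` vanishes, evaluated on any pair of tangent
vectors `v w` at the point `z` of the configuration space `X₃`. -/
theorem arnold_identity (z : Fin 3 → ℂ) (hz : ∀ i j : Fin 3, i ≠ j → z i ≠ z j)
    (v w : Fin 3 → ℂ) :
    (let ω : Fin 3 → Fin 3 → (Fin 3 → ℂ) → ℂ := fun i j u => (u i - u j) / (z i - z j)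
     let wedge : ((Fin 3 → ℂ) → ℂ) → ((Fin 3 → ℂ) → ℂ) → ℂ :=
       fun α β => α v * β w - α w * β v
     wedge (ω 0 1) (ω 1 2) + wedge (ω 1 2) (ω 2 0) + wedge (ω 2 0) (ω 0 1)) = 0 := by
  dsimp only
  have hne (i j : Fin 3) (h : i ≠ j) : z i - z j ≠ 0 := sub_ne_zero.mpr (hz i j h)
  -- The differences `u 0 - u 1`, `u 1 - u 2`, `u 2 - u 0` sum to zero, so the three
  -- numerator wedges all equal `d(z 0 - z 1) ∧ d(z 1 - z 2)`.
  calc _ = ((v 0 - v 1) * (w 1 - w 2) - (w 0 - w 1) * (v 1 - v 2)) *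
        ((z 0 - z 1)⁻¹ * (z 1 - z 2)⁻¹ + (z 1 - z 2)⁻¹ * (z 2 - z 0)⁻¹ +
          (z 2 - z 0)⁻¹ * (z 0 - z 1)⁻¹) := by ring
    _ = 0 := by
      rw [inv_mul_inv_add_inv_mul_inv_add_inv_mul_inv_eq_zero (hne 0 1 (by decide))
        (hne 1 2 (by decide)) (hne 2 0 (by decide)) (by ring), mul_zero]
end

section
/- The formal Knizhnik–Zamolodchikov connection is flat: if elements Ωij (1 ≤ i < j ≤ n) of an associative algebra satisfy the infinitesimal pure braid relations ([Ωij, Ωkl] = 0 when {i,j} ∩ {k,l} = ∅, and [Ωij, Ωik + Ωjk] = 0 for distinct i,j,k, with the convention Ωji = Ωij), then the connection Ω = Σ_{i<j} Ωij ωij on the configuration space Xn of n distinct points in ℂ satisfies dΩ + Ω∧Ω = 0. -/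
/-!
`dΩ = 0` because `d(ω_ij(u))(v) = -ω_ij(u) ω_ij(v)` is symmetric in `u` and `v`.
For `Ω ∧ Ω`, antisymmetry of the wedge product turns the sum into
`½ Σ (ω_ij ∧ ω_kl) [Ω_ij, Ω_kl]`. Brackets of disjoint or equal pairs vanish, so only pairs
`{s, a}`, `{s, b}` sharing one index survive. The braid relations make `[Ω_sa, Ω_sb]` invariant
under cyclic rotation of `(s, a, b)`, and Arnold's relation makes the cyclic sum of the
coefficients `ω_sa ∧ ω_sb` vanish.
-/

open Finset

section KZ

variable {ι 𝕜 A : Type*}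

section Forms

variable [Field 𝕜]

/- `kzForm z u i j` is `ω_ij = (dz_i - dz_j) / (z_i - z_j)` at the point `z` evaluated on the
tangent vector `u`, and `kzWedge z v w i j k l` is `(ω_ij ∧ ω_kl)(v, w)`. -/
def kzForm (z u : ι → 𝕜) (i j : ι) : 𝕜 := (u i - u j) / (z i - z j)

def kzWedge (z v w : ι → 𝕜) (i j k l : ι) : 𝕜 :=
  kzForm z v i j * kzForm z w k l - kzForm z w i j * kzForm z v k l

variable (z v w : ι → 𝕜)

lemma kzForm_comm (u : ι → 𝕜) (i j : ι) : kzForm z u j i = kzForm z u i j := by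
  rw [kzForm, kzForm, ← neg_sub (u i), ← neg_sub (z i), neg_div_neg_eq]

@[simp]
lemma kzForm_self (u : ι → 𝕜) (i : ι) : kzForm z u i i = 0 := by
  simp [kzForm]

lemma kzWedge_swap (i j k l : ι) : kzWedge z v w k l i j = -kzWedge z v w i j k l := by
  unfold kzWedge; ring

lemma kzWedge_comm_left (i j k l : ι) : kzWedge z v w j i k l = kzWedge z v w i j k l := by
  simp only [kzWedge, kzForm_comm z _ j i]

lemma kzWedge_comm_right (i j k l : ι) : kzWedge z v w i j l k = kzWedge z v w i j k l := by
  simp only [kzWedge, kzForm_comm z _ l k]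

@[simp]
lemma kzWedge_self_left (i k l : ι) : kzWedge z v w i i k l = 0 := by
  simp [kzWedge]

@[simp]
lemma kzWedge_self_right (i j k : ι) : kzWedge z v w i j k k = 0 := by
  simp [kzWedge]

lemma kzWedge_arnold {s a b : ι} (hsa : z s ≠ z a) (hab : z a ≠ z b) (hsb : z s ≠ z b) :
    kzWedge z v w s a s b + kzWedge z v w a b a s + kzWedge z v w b s b a = 0 := by
  have := sub_ne_zero.2 hsa
  have := sub_ne_zero.2 hab
  have := sub_ne_zero.2 hsb
  have := sub_ne_zero.2 hsa.symm
  have := sub_ne_zero.2 hab.symm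
  have := sub_ne_zero.2 hsb.symm
  simp only [kzWedge, kzForm]
  field_simp
  ring

end Forms

lemma sum_sum_eq_two_nsmul_sum_sum_filter_lt [Fintype ι] [LinearOrder ι] {M : Type*}
    [AddCommMonoid M] (f : ι → ι → M) (hf : ∀ i j, f j i = f i j) (hdiag : ∀ i, f i i = 0) :
    ∑ i, ∑ j, f i j = 2 • ∑ i, ∑ j ∈ univ.filter (fun j => i < j), f i j := by
  have hsplit : ∀ i j, f i j = (if i < j then f i j else 0) + (if j < i then f j i else 0) := by
    intro i j
    rcases lt_trichotomy i j with h | rfl | h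
    · simp [h, h.not_gt]
    · simp [hdiag]
    · simp [h, h.not_gt, hf]
  simp_rw [sum_filter]
  conv_lhs => enter [2, i, 2, j]; rw [hsplit i j]
  rw [two_nsmul]
  simp only [sum_add_distrib]
  exact congrArg _ sum_comm

section Commutators

variable [Ring A]

lemma two_nsmul_sum_smul_mul_of_antisymm {P R : Type*} [Fintype P] [Ring R] [Module R A]
    (c : P → P → R) (hc : ∀ p q, c q p = -c p q) (x : P → A) :
    2 • ∑ p, ∑ q, c p q • (x p * x q) = ∑ p, ∑ q, c p q • ⁅x p, x q⁆ := by
  rw [two_nsmul]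
  nth_rewrite 2 [sum_comm]
  rw [← sum_add_distrib]
  refine sum_congr rfl fun p _ => ?_
  rw [← sum_add_distrib]
  refine sum_congr rfl fun q _ => ?_
  rw [hc p q, neg_smul, Ring.lie_def, smul_sub, sub_eq_add_neg]

end Commutators

section Braid

attribute [local instance] LieRing.ofAssociativeRing

variable [Field 𝕜] [Ring A] [Module 𝕜 A] {Ω : ι → ι → A} (z v w : ι → 𝕜)

lemma lie_rotate_of_braid (hsymm : ∀ i j, Ω j i = Ω i j)
    (hbraid : ∀ i j k : ι, i ≠ j → j ≠ k → i ≠ k →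
      Ω i j * (Ω i k + Ω j k) = (Ω i k + Ω j k) * Ω i j)
    {s a b : ι} (hsa : s ≠ a) (hab : a ≠ b) (hsb : s ≠ b) :
    ⁅Ω a b, Ω a s⁆ = ⁅Ω s a, Ω s b⁆ := by
  have h : ⁅Ω s a, Ω s b⁆ + ⁅Ω s a, Ω a b⁆ = 0 := by
    rw [← lie_add]; exact Commute.lie_eq (hbraid s a b hsa hab hsb)
  rw [hsymm s a, ← lie_skew]
  exact neg_eq_of_add_eq_zero_left h

variable (Ω) in
def kzCommTerm (i j k l : ι) : A := kzWedge z v w i j k l • ⁅Ω i j, Ω k l⁆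

@[simp]
lemma kzCommTerm_self_left (i k l : ι) : kzCommTerm Ω z v w i i k l = 0 := by
  simp [kzCommTerm]

@[simp]
lemma kzCommTerm_self_right (i j k : ι) : kzCommTerm Ω z v w i j k k = 0 := by
  simp [kzCommTerm]

@[simp]
lemma kzCommTerm_self_pair (i j : ι) : kzCommTerm Ω z v w i j i j = 0 := by
  simp [kzCommTerm]

lemma kzCommTerm_comm_left (hsymm : ∀ i j, Ω j i = Ω i j) (i j k l : ι) :
    kzCommTerm Ω z v w j i k l = kzCommTerm Ω z v w i j k l := by
  rw [kzCommTerm, kzCommTerm, kzWedge_comm_left, hsymm]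

lemma kzCommTerm_comm_right (hsymm : ∀ i j, Ω j i = Ω i j) (i j k l : ι) :
    kzCommTerm Ω z v w i j l k = kzCommTerm Ω z v w i j k l := by
  rw [kzCommTerm, kzCommTerm, kzWedge_comm_right, hsymm l k]

/-- Only pairs `{i, j}`, `{k, l}` meeting in exactly one index contribute. -/
lemma kzCommTerm_eq_sum_ite [DecidableEq ι] (hsymm : ∀ i j, Ω j i = Ω i j)
    (hdisj : ∀ i j k l : ι, i ≠ k → i ≠ l → j ≠ k → j ≠ l → Ω i j * Ω k l = Ω k l * Ω i j)
    (i j k l : ι) :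
    kzCommTerm Ω z v w i j k l =
      (if k = i then kzCommTerm Ω z v w i j k l else 0)
        + (if k = j then kzCommTerm Ω z v w i j k l else 0)
        + (if l = i then kzCommTerm Ω z v w i j k l else 0)
        + (if l = j then kzCommTerm Ω z v w i j k l else 0) := by
  by_cases h0 : kzCommTerm Ω z v w i j k l = 0
  · simp [h0]
  have hij : i ≠ j := by rintro rfl; simp at h0
  have hkl : k ≠ l := by rintro rfl; simp at h0
  have hij_kl : ¬(k = i ∧ l = j) := by rintro ⟨rfl, rfl⟩; simp at h0
  have hij_lk : ¬(k = j ∧ l = i) := by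
    rintro ⟨rfl, rfl⟩; rw [kzCommTerm_comm_right _ _ _ hsymm] at h0; simp at h0
  have hmeet : k = i ∨ k = j ∨ l = i ∨ l = j := by
    by_contra! h
    refine h0 ?_
    obtain ⟨hki, hkj, hli, hlj⟩ := h
    rw [kzCommTerm, Commute.lie_eq (hdisj i j k l hki.symm hli.symm hkj.symm hlj.symm),
      smul_zero]
  split_ifs <;> grind

lemma sum_sum_kzCommTerm [Fintype ι] (hsymm : ∀ i j, Ω j i = Ω i j)
    (hdisj : ∀ i j k l : ι, i ≠ k → i ≠ l → j ≠ k → j ≠ l → Ω i j * Ω k l = Ω k l * Ω i j)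
    (i j : ι) :
    ∑ k, ∑ l, kzCommTerm Ω z v w i j k l =
      ∑ l, kzCommTerm Ω z v w i j i l + ∑ l, kzCommTerm Ω z v w i j j l
        + ∑ k, kzCommTerm Ω z v w i j k i + ∑ k, kzCommTerm Ω z v w i j k j := by
  classical
  conv_lhs => enter [2, k, 2, l]; rw [kzCommTerm_eq_sum_ite z v w hsymm hdisj]
  simp [sum_add_distrib]

lemma sum_kzCommTerm_eq_four_nsmul [Fintype ι] (hsymm : ∀ i j, Ω j i = Ω i j)
    (hdisj : ∀ i j k l : ι, i ≠ k → i ≠ l → j ≠ k → j ≠ l → Ω i j * Ω k l = Ω k l * Ω i j) :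
    ∑ i, ∑ j, ∑ k, ∑ l, kzCommTerm Ω z v w i j k l =
      4 • ∑ s, ∑ a, ∑ b, kzCommTerm Ω z v w s a s b := by
  have h2 : ∑ i, ∑ j, ∑ l, kzCommTerm Ω z v w i j j l =
      ∑ s, ∑ a, ∑ b, kzCommTerm Ω z v w s a s b := by
    rw [sum_comm]
    exact sum_congr rfl fun _ _ => sum_congr rfl fun _ _ => sum_congr rfl fun _ _ =>
      kzCommTerm_comm_left z v w hsymm ..
  have h3 : ∑ i, ∑ j, ∑ k, kzCommTerm Ω z v w i j k i =
      ∑ s, ∑ a, ∑ b, kzCommTerm Ω z v w s a s b :=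
    sum_congr rfl fun _ _ => sum_congr rfl fun _ _ => sum_congr rfl fun _ _ =>
      kzCommTerm_comm_right z v w hsymm ..
  have h4 : ∑ i, ∑ j, ∑ k, kzCommTerm Ω z v w i j k j =
      ∑ s, ∑ a, ∑ b, kzCommTerm Ω z v w s a s b := by
    rw [sum_comm]
    exact sum_congr rfl fun _ _ => sum_congr rfl fun _ _ => sum_congr rfl fun _ _ =>
      (kzCommTerm_comm_right z v w hsymm ..).trans (kzCommTerm_comm_left z v w hsymm ..)
  simp only [sum_sum_kzCommTerm z v w hsymm hdisj, sum_add_distrib, h2, h3, h4]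
  abel

lemma kzCommTerm_cyclic (hsymm : ∀ i j, Ω j i = Ω i j)
    (hbraid : ∀ i j k : ι, i ≠ j → j ≠ k → i ≠ k →
      Ω i j * (Ω i k + Ω j k) = (Ω i k + Ω j k) * Ω i j)
    (hz : Function.Injective z) (s a b : ι) :
    kzCommTerm Ω z v w s a s b + kzCommTerm Ω z v w a b a s + kzCommTerm Ω z v w b s b a = 0 := by
  by_cases hdeg : s = a ∨ a = b ∨ s = b
  · rcases hdeg with rfl | rfl | rfl <;> simp
  push Not at hdeg
  obtain ⟨hsa, hab, hsb⟩ := hdeg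
  rw [kzCommTerm, kzCommTerm, kzCommTerm,
    lie_rotate_of_braid hsymm hbraid hab hsb.symm hsa.symm,
    lie_rotate_of_braid hsymm hbraid hsa hab hsb, ← add_smul, ← add_smul,
    kzWedge_arnold z v w (hz.ne hsa) (hz.ne hab) (hz.ne hsb), zero_smul]

lemma sum_kzCommTerm_triple_eq_zero [Fintype ι] [CharZero 𝕜] (hsymm : ∀ i j, Ω j i = Ω i j)
    (hbraid : ∀ i j k : ι, i ≠ j → j ≠ k → i ≠ k →
      Ω i j * (Ω i k + Ω j k) = (Ω i k + Ω j k) * Ω i j)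
    (hz : Function.Injective z) :
    ∑ s, ∑ a, ∑ b, kzCommTerm Ω z v w s a s b = 0 := by
  have hrot : ∀ g : ι → ι → ι → A, ∑ s, ∑ a, ∑ b, g a b s = ∑ s, ∑ a, ∑ b, g s a b :=
    fun g => sum_comm.trans (sum_congr rfl fun _ _ => sum_comm)
  have h3 : 3 • ∑ s, ∑ a, ∑ b, kzCommTerm Ω z v w s a s b = 0 := by
    calc 3 • ∑ s, ∑ a, ∑ b, kzCommTerm Ω z v w s a s b
        = ∑ s, ∑ a, ∑ b, (kzCommTerm Ω z v w s a s b + kzCommTerm Ω z v w a b a s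
            + kzCommTerm Ω z v w b s b a) := by
          simp only [sum_add_distrib, hrot (fun s a b => kzCommTerm Ω z v w a b a s),
            hrot (fun s a b => kzCommTerm Ω z v w s a s b)]
          abel
      _ = 0 := sum_eq_zero fun s _ => sum_eq_zero fun a _ => sum_eq_zero fun b _ =>
          kzCommTerm_cyclic z v w hsymm hbraid hz s a b
  have : IsAddTorsionFree A := .of_isTorsionFree 𝕜 A
  exact (smul_eq_zero.1 h3).resolve_left (by norm_num)

lemma sum_kzWedge_smul_mul_eq_zero [Fintype ι] [LinearOrder ι] [CharZero 𝕜]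
    (hsymm : ∀ i j, Ω j i = Ω i j)
    (hdisj : ∀ i j k l : ι, i ≠ k → i ≠ l → j ≠ k → j ≠ l → Ω i j * Ω k l = Ω k l * Ω i j)
    (hbraid : ∀ i j k : ι, i ≠ j → j ≠ k → i ≠ k →
      Ω i j * (Ω i k + Ω j k) = (Ω i k + Ω j k) * Ω i j)
    (hz : Function.Injective z) :
    ∑ i, ∑ j ∈ univ.filter (fun j => i < j), ∑ k, ∑ l ∈ univ.filter (fun l => k < l),
      kzWedge z v w i j k l • (Ω i j * Ω k l) = 0 := by
  have hinner : ∀ i j, ∑ k, ∑ l, kzWedge z v w i j k l • (Ω i j * Ω k l) =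
      2 • ∑ k, ∑ l ∈ univ.filter (fun l => k < l), kzWedge z v w i j k l • (Ω i j * Ω k l) :=
    fun i j => sum_sum_eq_two_nsmul_sum_sum_filter_lt _
      (fun k l => by rw [kzWedge_comm_right, hsymm l k]) (fun k => by simp)
  have houter := sum_sum_eq_two_nsmul_sum_sum_filter_lt
    (fun i j => ∑ k, ∑ l ∈ univ.filter (fun l => k < l), kzWedge z v w i j k l • (Ω i j * Ω k l))
    (fun i j => by simp only [kzWedge_comm_left, hsymm]) (fun i => by simp)
  have hanti := two_nsmul_sum_smul_mul_of_antisymm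
    (fun p q : ι × ι => kzWedge z v w p.1 p.2 q.1 q.2) (fun p q => kzWedge_swap ..)
    (fun p => Ω p.1 p.2)
  simp only [Fintype.sum_prod_type] at hanti
  have hfull : 2 • ∑ i, ∑ j, ∑ k, ∑ l, kzWedge z v w i j k l • (Ω i j * Ω k l) = 0 := by
    rw [hanti]
    exact (sum_kzCommTerm_eq_four_nsmul z v w hsymm hdisj).trans <| by
      rw [sum_kzCommTerm_triple_eq_zero z v w hsymm hbraid hz, smul_zero]
  simp only [hinner, ← smul_sum, houter] at hfull
  have : IsAddTorsionFree A := .of_isTorsionFree 𝕜 A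
  rw [smul_smul, smul_smul] at hfull
  exact (smul_eq_zero.1 hfull).resolve_left (by norm_num)

end Braid

section Closed

variable [NontriviallyNormedField 𝕜] [Fintype ι]

lemma hasFDerivAt_kzForm (u : ι → 𝕜) {z : ι → 𝕜} {i j : ι} (h : z i ≠ z j) :
    HasFDerivAt (fun y => kzForm y u i j)
      ((u i - u j) • (-((z i - z j) ^ 2)⁻¹ •
        (ContinuousLinearMap.proj (R := 𝕜) (φ := fun _ : ι => 𝕜) i
          - ContinuousLinearMap.proj j))) z := by
  have hd := (hasDerivAt_inv (sub_ne_zero.2 h)).comp_hasFDerivAt z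
    ((hasFDerivAt_apply (𝕜 := 𝕜) i z).fun_sub (hasFDerivAt_apply j z))
  simpa [kzForm, div_eq_mul_inv] using hd.const_mul (u i - u j)

lemma fderiv_kzForm_apply (u v : ι → 𝕜) {z : ι → 𝕜} {i j : ι} (h : z i ≠ z j) :
    fderiv 𝕜 (fun y => kzForm y u i j) z v = -(kzForm z u i j * kzForm z v i j) := by
  have := sub_ne_zero.2 h
  rw [(hasFDerivAt_kzForm u h).fderiv]
  simp only [kzForm, smul_apply, sub_apply, ContinuousLinearMap.proj_apply, smul_eq_mul]
  field_simp

variable [LinearOrder ι] {E : Type*} [NormedAddCommGroup E] [NormedSpace 𝕜 E]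

lemma fderiv_sum_kzForm_smul_apply (Ω : ι → ι → E) (u v : ι → 𝕜) {z : ι → 𝕜}
    (hz : Function.Injective z) :
    fderiv 𝕜 (fun y => ∑ i, ∑ j ∈ univ.filter (fun j => i < j), kzForm y u i j • Ω i j) z v =
      -∑ i, ∑ j ∈ univ.filter (fun j => i < j), (kzForm z u i j * kzForm z v i j) • Ω i j := by
  have hd : ∀ i, ∀ j ∈ univ.filter (fun j => i < j),
      HasFDerivAt (fun y => kzForm y u i j • Ω i j)
        ((fderiv 𝕜 (fun y => kzForm y u i j) z).smulRight (Ω i j)) z :=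
    fun i j hj => ((hasFDerivAt_kzForm u (hz.ne (mem_filter.1 hj).2.ne)).differentiableAt
      |>.hasFDerivAt).smul_const (Ω i j)
  rw [(HasFDerivAt.fun_sum fun i _ => HasFDerivAt.fun_sum (hd i)).fderiv]
  simp only [_root_.sum_apply, ContinuousLinearMap.smulRight_apply, ← sum_neg_distrib]
  refine sum_congr rfl fun i _ => sum_congr rfl fun j hj => ?_
  rw [fderiv_kzForm_apply u v (hz.ne (mem_filter.1 hj).2.ne), neg_smul]

lemma fderiv_sum_kzForm_smul_apply_comm (Ω : ι → ι → E) (v w : ι → 𝕜) {z : ι → 𝕜}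
    (hz : Function.Injective z) :
    fderiv 𝕜 (fun y => ∑ i, ∑ j ∈ univ.filter (fun j => i < j), kzForm y w i j • Ω i j) z v =
      fderiv 𝕜 (fun y => ∑ i, ∑ j ∈ univ.filter (fun j => i < j), kzForm y v i j • Ω i j) z w := by
  simp only [fderiv_sum_kzForm_smul_apply Ω _ _ hz, mul_comm]

end Closed

end KZ

/-- **Flatness of the formal Knizhnik–Zamolodchikov connection.**
If the elements `Ω i j` of an associative algebra satisfy the infinitesimal pure
braid relations, then the connection `Ω = Σ_{i<j} Ω i j • ω i j` on the
configuration space of `n` distinct points in ℂ has vanishing curvature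
`dΩ + Ω∧Ω = 0`, evaluated at any point `z` with distinct coordinates on any pair
of tangent vectors `v, w`.  Here `ω i j = (dz i − dz j)/(z i − z j)`, the exterior
derivative is expressed via `fderiv`, and the wedge product of the `A`-valued
1-form with itself uses the algebra product on coefficients. -/
theorem formal_KZ_connection_flat {A : Type*} [NormedRing A] [NormedAlgebra ℂ A] (n : ℕ)
    (Ω : Fin n → Fin n → A)
    (hsymm : ∀ i j, Ω j i = Ω i j)
    (hdisj : ∀ i j k l : Fin n, i ≠ k → i ≠ l → j ≠ k → j ≠ l →
      Ω i j * Ω k l = Ω k l * Ω i j)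
    (hbraid : ∀ i j k : Fin n, i ≠ j → j ≠ k → i ≠ k →
      Ω i j * (Ω i k + Ω j k) = (Ω i k + Ω j k) * Ω i j)
    (z v w : Fin n → ℂ) (hz : Function.Injective z) :
    (let ω : Fin n → Fin n → (Fin n → ℂ) → (Fin n → ℂ) → ℂ :=
       fun i j y u => (u i - u j) / (y i - y j)
     let conn : (Fin n → ℂ) → (Fin n → ℂ) → A := fun y u =>
       ∑ i : Fin n, ∑ j ∈ univ.filter (fun j => i < j), ω i j y u • Ω i j
     (fderiv ℂ (fun y => conn y w) z v - fderiv ℂ (fun y => conn y v) z w)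
       + ∑ i : Fin n, ∑ j ∈ univ.filter (fun j => i < j), ∑ k : Fin n,
           ∑ l ∈ univ.filter (fun l => k < l),
           (ω i j z v * ω k l z w - ω i j z w * ω k l z v) • (Ω i j * Ω k l)) = 0 := by
  have hclosed := fderiv_sum_kzForm_smul_apply_comm Ω v w hz
  have hquad := sum_kzWedge_smul_mul_eq_zero z v w hsymm hdisj hbraid hz
  exact (congrArg₂ (· + ·) (sub_eq_zero.2 hclosed) hquad).trans (add_zero 0)
end

section
/- The holonomy of a connection with values in a positively-graded complete algebra exists and is given by the iterated integral series: if Ω is a degree-1 homogeneous A-valued 1-form pulled back to an interval I = [a,b] as f(t)dt, then the function h(t) = 1 + Σ_{m≥1} ∫_{a ≤ t1 ≤ … ≤ tm ≤ t} f(tm)⋯f(t1) dtm⋯dt1 satisfies h(a) = 1 and h'(t) = f(t)·h(t). -/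
open MeasureTheory Set

variable {M : ℕ → Type*} [∀ m, NormedAddCommGroup (M m)] [∀ m, NormedSpace ℂ (M m)]
  [∀ m, FiniteDimensional ℂ (M m)] [∀ m, CompleteSpace (M m)]

/-- The degree-`m` iterated integral `∫_{a ≤ t₁ ≤ … ≤ tₘ ≤ t} f(tₘ)⋯f(t₁)`,
written recursively: `h₀ ≡ 1` (the unit `e ∈ M 0`) and
`h_{m+1}(t) = ∫_a^t f(s)·h_m(s) ds`, with the product `μ 1 m` landing in
degree `1 + m = m + 1`. -/
noncomputable def iterInt (μ : ∀ i j : ℕ, M i →ₗ[ℂ] M j →ₗ[ℂ] M (i + j))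
    (e : M 0) (f : ℝ → M 1) (a : ℝ) : (m : ℕ) → ℝ → M m
  | 0 => fun _ => e
  | m + 1 => fun t =>
      cast (congrArg M (Nat.add_comm 1 m)) (∫ s in a..t, μ 1 m (f s) (iterInt μ e f a m s))

/-! The recursion `h_{m+1}(t) = ∫_a^t f(s)·h_m(s) ds` is the degreewise form of
`h = 1 + ∫_a^t f·h`, so the ODE is the fundamental theorem of calculus as soon as every `h_m`
is continuous on `[a, b]`. Continuity follows by induction on `m`: the integrand `f·h_m` is
continuous because a bilinear map between finite-dimensional spaces is, and a primitive of a
continuous function is differentiable, hence continuous. -/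

theorem cast_congrArg_zero {ι : Type*} {N : ι → Type*} [∀ i, Zero (N i)] {i j : ι}
    (h : i = j) : cast (congrArg N h) (0 : N i) = 0 := by
  subst h; rfl

theorem HasDerivWithinAt.cast_congrArg {ι : Type*} {N : ι → Type*}
    [∀ i, NormedAddCommGroup (N i)] [∀ i, NormedSpace ℝ (N i)] {i j : ι} (h : i = j)
    {g : ℝ → N i} {g' : N i} {s : Set ℝ} {t : ℝ} (hg : HasDerivWithinAt g g' s t) :
    HasDerivWithinAt (fun x => cast (congrArg N h) (g x)) (cast (congrArg N h) g') s t := by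
  subst h; exact hg

theorem LinearMap.continuousOn_apply₂_of_finiteDimensional {𝕜 E F G X : Type*}
    [NontriviallyNormedField 𝕜] [CompleteSpace 𝕜]
    [NormedAddCommGroup E] [NormedSpace 𝕜 E] [FiniteDimensional 𝕜 E]
    [NormedAddCommGroup F] [NormedSpace 𝕜 F] [FiniteDimensional 𝕜 F]
    [NormedAddCommGroup G] [NormedSpace 𝕜 G] [TopologicalSpace X]
    (B : E →ₗ[𝕜] F →ₗ[𝕜] G) {u : X → E} {v : X → F} {s : Set X}
    (hu : ContinuousOn u s) (hv : ContinuousOn v s) :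
    ContinuousOn (fun x => B (u x) (v x)) s :=
  B.toContinuousBilinearMap.continuous₂.comp_continuousOn (hu.prodMk hv)

theorem ContinuousOn.hasDerivWithinAt_integral_Icc {E : Type*} [NormedAddCommGroup E]
    [NormedSpace ℝ E] [CompleteSpace E] {g : ℝ → E} {a b t : ℝ}
    (hg : ContinuousOn g (Icc a b)) (ht : t ∈ Icc a b) :
    HasDerivWithinAt (fun u => ∫ s in a..u, g s) (g t) (Icc a b) t := by
  have : Fact (t ∈ Icc a b) := ⟨ht⟩
  have hint : IntervalIntegrable g volume a t :=
    (hg.mono (by rw [uIcc_of_le ht.1]; exact Icc_subset_Icc_right ht.2)).intervalIntegrable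
  exact intervalIntegral.integral_hasDerivWithinAt_right hint
    (hg.stronglyMeasurableAtFilter_nhdsWithin measurableSet_Icc t) (hg t ht)

section IterInt

variable (μ : ∀ i j : ℕ, M i →ₗ[ℂ] M j →ₗ[ℂ] M (i + j)) (e : M 0)

omit [∀ m, FiniteDimensional ℂ (M m)] [∀ m, CompleteSpace (M m)] in
theorem iterInt_succ_self (f : ℝ → M 1) (a : ℝ) (m : ℕ) :
    iterInt μ e f a (m + 1) a = 0 := by
  simp only [iterInt, intervalIntegral.integral_same]
  exact cast_congrArg_zero (Nat.add_comm 1 m)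

variable {f : ℝ → M 1} {a b : ℝ}

theorem hasDerivWithinAt_iterInt_succ (hf : ContinuousOn f (Icc a b)) {m : ℕ}
    (hm : ContinuousOn (iterInt μ e f a m) (Icc a b)) {t : ℝ} (ht : t ∈ Icc a b) :
    HasDerivWithinAt (iterInt μ e f a (m + 1))
      (cast (congrArg M (Nat.add_comm 1 m)) (μ 1 m (f t) (iterInt μ e f a m t))) (Icc a b) t :=
  have hintegrand : ContinuousOn (fun s => μ 1 m (f s) (iterInt μ e f a m s)) (Icc a b) :=
    (μ 1 m).continuousOn_apply₂_of_finiteDimensional hf hm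
  (hintegrand.hasDerivWithinAt_integral_Icc ht).cast_congrArg (Nat.add_comm 1 m)

theorem continuousOn_iterInt (hf : ContinuousOn f (Icc a b)) (m : ℕ) :
    ContinuousOn (iterInt μ e f a m) (Icc a b) := by
  induction m with
  | zero => exact continuousOn_const
  | succ m ih =>
    exact fun t ht => (hasDerivWithinAt_iterInt_succ μ e hf ih ht).continuousWithinAt

end IterInt

theorem holonomy_iterated_integral_general
    (μ : ∀ i j : ℕ, M i →ₗ[ℂ] M j →ₗ[ℂ] M (i + j)) (e : M 0)
    (a b : ℝ) (f : ℝ → M 1) (hf : ContinuousOn f (Icc a b)) :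
    iterInt μ e f a 0 a = e ∧
    (∀ m : ℕ, iterInt μ e f a (m + 1) a = 0) ∧
    (∀ t ∈ Icc a b,
      HasDerivWithinAt (iterInt μ e f a 0) 0 (Icc a b) t ∧
      ∀ m : ℕ, HasDerivWithinAt (iterInt μ e f a (m + 1))
        (cast (congrArg M (Nat.add_comm 1 m)) (μ 1 m (f t) (iterInt μ e f a m t)))
        (Icc a b) t) :=
  ⟨rfl, iterInt_succ_self μ e f a, fun _ ht => ⟨hasDerivWithinAt_const _ _ _,
    fun m => hasDerivWithinAt_iterInt_succ μ e hf (continuousOn_iterInt μ e hf m) ht⟩⟩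

/-- **Existence of holonomy via iterated integrals.**  Let `A = ∏ₘ M m` be the
completion of a graded algebra of finite type and let `f : [a,b] → M 1` be a
continuous degree-1 connection coefficient (the pullback `B*Ω = f(t)dt`).  Then
`h(t) = 1 + Σ_{m≥1} h_m(t)` (with degree-`m` component `iterInt … m t`) satisfies
`h(a) = 1` and solves the holonomy ODE `h'(t) = f(t)·h(t)` degreewise:
the degree-0 component is constant, and the derivative of the degree-`(m+1)`
component is the degree-`(m+1)` component of `f(t)·h(t)`, namely
`μ 1 m (f t) (h_m(t))`. -/
theorem holonomy_iterated_integral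
    (μ : ∀ i j : ℕ, M i →ₗ[ℂ] M j →ₗ[ℂ] M (i + j)) (e : M 0)
    (a b : ℝ) (hab : a ≤ b) (f : ℝ → M 1) (hf : ContinuousOn f (Icc a b)) :
    iterInt μ e f a 0 a = e ∧
    (∀ m : ℕ, iterInt μ e f a (m + 1) a = 0) ∧
    (∀ t ∈ Icc a b,
      HasDerivWithinAt (iterInt μ e f a 0) 0 (Icc a b) t ∧
      ∀ m : ℕ, HasDerivWithinAt (iterInt μ e f a (m + 1))
        (cast (congrArg M (Nat.add_comm 1 m)) (μ 1 m (f t) (iterInt μ e f a m t)))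
        (Icc a b) t) :=
  holonomy_iterated_integral_general μ e a b f hf
end
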